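/- Let p and q be distinct primes, α and β positive integers, and n = p^α q^β. Then in the graph Cl₂(ℤ_n), for every idempotent e of ℤ_n with e ≠ 0 and e ≠ 1 and every unit u of ℤ_n, the degree of the vertex (e, u) equals 1 + φ(n) if u² = 1, and equals 2 + φ(n) if u² ≠ 1, where φ is Euler's totient function. -/

import Mathlib

/-- The clean graph `Cl₂(R)`: vertices are pairs `(e, u)` where `e` is a nonzero
idempotent of `R` and `u` is a unit of `R`; two distinct vertices `(e, u)` and
`(f, v)` are adjacent iff `e * f = 0` or `u * v = 1`. -/
def Cl2 (R : Type*) [CommRing R] :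
    SimpleGraph ({e : R // IsIdempotentElem e ∧ e ≠ 0} × Rˣ) where
  Adj v w := v ≠ w ∧ (((v.1 : R) * (w.1 : R) = 0) ∨ ((v.2 : R) * (w.2 : R) = 1))
  symm := by
    constructor
    rintro v w ⟨hne, h⟩
    refine ⟨hne.symm, ?_⟩
    rcases h with h | h
    · left; rwa [mul_comm]
    · right; rwa [mul_comm]
  loopless := by constructor; rintro v ⟨h, -⟩; exact h rfl

/-- The Sombor index of a graph: the sum over edges `uv` of
`√(deg(u)² + deg(v)²)`. -/
noncomputable def somborIndex {V : Type*} (G : SimpleGraph V) : ℝ :=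
  ∑ᶠ e ∈ G.edgeSet,
    Sym2.lift
      ⟨fun u v =>
        Real.sqrt (((G.neighborSet u).ncard : ℝ) ^ 2 + ((G.neighborSet v).ncard : ℝ) ^ 2),
        fun u v => by simp [add_comm]⟩ e

/-! By the Chinese remainder theorem `ℤ_n ≅ ℤ_{p^α} × ℤ_{q^β}` is a product of two local rings,
so its only idempotents are `0, 1, e, 1 - e`. Hence the neighbours of `(e, u)` are the `φ(n)`
vertices `(1 - e, v)` (as `e (1 - e) = 0`), the vertex `(1, u⁻¹)`, and `(e, u⁻¹)` unless it is
`(e, u)` itself, i.e. unless `u² = 1`. -/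

theorem IsIdempotentElem.eq_zero_or_one_of_isLocalRing {R : Type*} [CommRing R] [IsLocalRing R]
    {e : R} (he : IsIdempotentElem e) : e = 0 ∨ e = 1 := by
  rcases IsLocalRing.isUnit_or_isUnit_one_sub_self e with h | h
  · exact .inr ((iff_eq_one_of_isUnit h).mp he)
  · exact .inl (h.mul_left_eq_zero.mp he.mul_one_sub_self)

theorem ZMod.isLocalRing_prime_pow {p d : ℕ} (hp : p.Prime) (hd : 0 < d) :
    IsLocalRing (ZMod (p ^ d)) := by
  have : NeZero (p ^ d) := ⟨pow_ne_zero _ hp.ne_zero⟩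
  have : Fact p.Prime := ⟨hp⟩
  have : Nontrivial (ZMod (p ^ d)) := ZMod.nontrivial_iff.mpr (Nat.one_lt_pow hd.ne' hp.one_lt).ne'
  let π : ZMod (p ^ d) →+* ZMod p := ZMod.castHom (dvd_pow_self p hd.ne') _
  have π_eq_zero : ∀ a, ¬IsUnit a → π a = 0 := by
    intro a ha
    rw [← ZMod.natCast_zmod_val a, map_natCast, ZMod.natCast_eq_zero_iff]
    rwa [← ZMod.natCast_zmod_val a, ZMod.isUnit_natCast_iff_not_dvd_pow hp hd, not_not] at ha
  refine .of_isUnit_or_isUnit_one_sub_self fun a => ?_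
  by_contra! h
  simpa [π_eq_zero a h.1] using π_eq_zero _ h.2

theorem Prod.setOf_isIdempotentElem_subset_of_isLocalRing {R S : Type*} [CommRing R]
    [CommRing S] [IsLocalRing R] [IsLocalRing S] {e : R × S} (he : IsIdempotentElem e)
    (he0 : e ≠ 0) (he1 : e ≠ 1) : {f : R × S | IsIdempotentElem f} ⊆ {0, 1, e, 1 - e} := by
  rintro ⟨c, d⟩ (hf : IsIdempotentElem _)
  obtain ⟨a, b⟩ := e
  rcases (he.map (RingHom.fst R S)).eq_zero_or_one_of_isLocalRing with rfl | rfl <;>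
  rcases (he.map (RingHom.snd R S)).eq_zero_or_one_of_isLocalRing with rfl | rfl <;>
  rcases (hf.map (RingHom.fst R S)).eq_zero_or_one_of_isLocalRing with rfl | rfl <;>
  rcases (hf.map (RingHom.snd R S)).eq_zero_or_one_of_isLocalRing with rfl | rfl <;>
  simp_all [Prod.ext_iff]

theorem ZMod.setOf_isIdempotentElem_subset_of_prime_pow_mul_prime_pow {p q α β : ℕ}
    (hp : p.Prime) (hq : q.Prime) (hpq : p ≠ q) (hα : 0 < α) (hβ : 0 < β)
    {e : ZMod (p ^ α * q ^ β)} (he : IsIdempotentElem e) (he0 : e ≠ 0) (he1 : e ≠ 1) :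
    {f : ZMod (p ^ α * q ^ β) | IsIdempotentElem f} ⊆ {0, 1, e, 1 - e} := by
  intro f (hf : IsIdempotentElem f)
  have := ZMod.isLocalRing_prime_pow hp hα
  have := ZMod.isLocalRing_prime_pow hq hβ
  let σ := ZMod.chineseRemainder (Nat.Coprime.pow α β ((Nat.coprime_primes hp hq).mpr hpq))
  have := Prod.setOf_isIdempotentElem_subset_of_isLocalRing (he.map σ) (by simpa using he0)
    (by simpa using he1) (hf.map σ)
  rw [← σ.injective.mem_set_image]
  simpa only [Set.image_insert_eq, Set.image_singleton, map_zero, map_one, map_sub] using this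

theorem IsIdempotentElem.ne_one_sub_self {R : Type*} [Ring R] {e : R} (he : IsIdempotentElem e)
    (he0 : e ≠ 0) : e ≠ 1 - e :=
  fun h => he0 (by simpa [← h, he.eq] using he.mul_one_sub_self)

namespace Cl2

variable {R : Type*} [CommRing R] {e : R} (he : IsIdempotentElem e) (he0 : e ≠ 0)

theorem adj_iff_of_idempotents (he1 : e ≠ 1)
    (hidem : {f : R | IsIdempotentElem f} ⊆ {0, 1, e, 1 - e}) (u : Rˣ)
    (f : {f : R // IsIdempotentElem f ∧ f ≠ 0}) (w : Rˣ) :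
    (Cl2 R).Adj (⟨e, he, he0⟩, u) (f, w) ↔
      (f : R) = 1 - e ∨ w = u⁻¹ ∧ ((f : R) = 1 ∨ (f : R) = e ∧ w ≠ u) := by
  have hee : e * e ≠ 0 := by rwa [he.eq]
  have hecompl := he.ne_one_sub_self he0
  obtain ⟨f, hf, hf0⟩ := f
  simp only [Cl2, ne_eq, Prod.mk.injEq, Subtype.mk.injEq, ← Units.val_mul, Units.val_eq_one,
    mul_eq_one_iff_eq_inv']
  rcases hidem hf with rfl | rfl | rfl | rfl
  · simp at hf0
  · simp [he0, he1, eq_comm (a := (1 : R)), eq_comm (a := w)]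
  · simp [hee, he1, hecompl, and_comm, eq_comm]
  · simp [he.mul_one_sub_self, hecompl]

theorem neighborSet_of_sq_eq_one [Nontrivial R] (he1 : e ≠ 1)
    (hidem : {f : R | IsIdempotentElem f} ⊆ {0, 1, e, 1 - e}) {u : Rˣ} (hu : u ^ 2 = 1) :
    (Cl2 R).neighborSet (⟨e, he, he0⟩, u) =
      insert (⟨1, .one, one_ne_zero⟩, u⁻¹)
        ({⟨1 - e, he.one_sub, sub_ne_zero.mpr he1.symm⟩} ×ˢ .univ) := by
  have hinv : u⁻¹ = u := inv_eq_of_mul_eq_one_right (by rw [← sq, hu])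
  ext ⟨⟨f, hf⟩, w⟩
  simp only [SimpleGraph.mem_neighborSet, adj_iff_of_idempotents he he0 he1 hidem, hinv, ne_eq,
    Set.mem_insert_iff, Prod.mk.injEq, Subtype.ext_iff, Set.mem_prod, Set.mem_singleton_iff,
    Set.mem_univ, and_true]
  tauto

theorem neighborSet_of_sq_ne_one [Nontrivial R] (he1 : e ≠ 1)
    (hidem : {f : R | IsIdempotentElem f} ⊆ {0, 1, e, 1 - e}) {u : Rˣ} (hu : u ^ 2 ≠ 1) :
    (Cl2 R).neighborSet (⟨e, he, he0⟩, u) =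
      insert (⟨e, he, he0⟩, u⁻¹) (insert (⟨1, .one, one_ne_zero⟩, u⁻¹)
        ({⟨1 - e, he.one_sub, sub_ne_zero.mpr he1.symm⟩} ×ˢ .univ)) := by
  have hinv : ∀ w, w = u⁻¹ → w ≠ u := by
    rintro w rfl h
    exact hu (by rw [sq]; exact inv_eq_iff_mul_eq_one.mp h)
  ext ⟨⟨f, hf⟩, w⟩
  simp only [SimpleGraph.mem_neighborSet, adj_iff_of_idempotents he he0 he1 hidem, ne_eq,
    Set.mem_insert_iff, Prod.mk.injEq, Subtype.ext_iff, Set.mem_prod, Set.mem_singleton_iff,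
    Set.mem_univ, and_true]
  have := hinv w
  tauto

open Classical in
theorem ncard_neighborSet [Finite R] [Nontrivial R] (he1 : e ≠ 1)
    (hidem : {f : R | IsIdempotentElem f} ⊆ {0, 1, e, 1 - e}) (u : Rˣ) :
    ((Cl2 R).neighborSet (⟨e, he, he0⟩, u)).ncard = Nat.card Rˣ + if u ^ 2 = 1 then 1 else 2 := by
  set compl : {f : R // IsIdempotentElem f ∧ f ≠ 0} :=
    ⟨1 - e, he.one_sub, sub_ne_zero.mpr he1.symm⟩
  have hcompl : ({compl} ×ˢ (.univ : Set Rˣ)).ncard = Nat.card Rˣ := by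
    rw [Set.ncard_prod, Set.ncard_singleton, Set.ncard_univ, one_mul]
  have hone : (⟨1, .one, one_ne_zero⟩, u⁻¹) ∉ {compl} ×ˢ (.univ : Set Rˣ) := by
    simp [compl, Subtype.ext_iff, eq_comm (a := (1 : R)), he0]
  split_ifs with hu
  · rw [neighborSet_of_sq_eq_one he he0 he1 hidem hu, Set.ncard_insert_of_notMem hone, hcompl]
  · rw [neighborSet_of_sq_ne_one he he0 he1 hidem hu, Set.ncard_insert_of_notMem,
      Set.ncard_insert_of_notMem hone, hcompl]
    simp [Subtype.ext_iff, he1, he.ne_one_sub_self he0]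

end Cl2

theorem cl2_two_prime_powers_degree_nontrivial (p q : ℕ) (hp : p.Prime) (hq : q.Prime)
    (hpq : p ≠ q) (α β : ℕ) (hα : 0 < α) (hβ : 0 < β) (n : ℕ) (hn : n = p ^ α * q ^ β)
    (e : ZMod n) (he : IsIdempotentElem e) (he0 : e ≠ 0) (he1 : e ≠ 1)
    (u : (ZMod n)ˣ) :
    (u ^ 2 = 1 →
      ((Cl2 (ZMod n)).neighborSet (⟨e, he, he0⟩, u)).ncard = 1 + n.totient) ∧
    (u ^ 2 ≠ 1 →
      ((Cl2 (ZMod n)).neighborSet (⟨e, he, he0⟩, u)).ncard = 2 + n.totient) := by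
  subst hn
  have : NeZero (p ^ α * q ^ β) := ⟨by simp [hp.ne_zero, hq.ne_zero]⟩
  have : Nontrivial (ZMod (p ^ α * q ^ β)) := nontrivial_of_ne e 0 he0
  have hidem :=
    ZMod.setOf_isIdempotentElem_subset_of_prime_pow_mul_prime_pow hp hq hpq hα hβ he he0 he1
  rw [Cl2.ncard_neighborSet he he0 he1 hidem, Nat.card_eq_fintype_card, ZMod.card_units_eq_totient]
  exact ⟨fun hu => by simp [hu, add_comm], fun hu => by simp [hu, add_comm]⟩
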